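/- For every natural number n, the limit as ε → 0 (through nonzero real values near 0) of the ratio of Pochhammer symbols (ε−n)_{2n+1} / (2ε−2n)_{2n+1} equals (−1)^n (n!)² / (2·(2n)!), which moreover equals (−1)^n n! / (2^{2n+1} (1/2)_n). -/

import Mathlib

/-! The zeros of numerator and denominator at `ε = 0` are simple:
`(ε - n)_{2n+1} = ε (ε - n)_n (ε + 1)_n` and `(2ε - 2n)_{2n+1} = 2ε (2ε - 2n)_{2n}`.
After cancelling `ε` the ratio is continuous at `0`, and its value there follows from
`(-m)_m = (-1)^m m!` and `(1)_m = m!`. The second form comes from `(1/2)_n = (2n)! / (4^n n!)`. -/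

open Topology Filter

/-- Pochhammer symbol `(x)_k = ∏_{i=0}^{k-1} (x + i)` for a real number `x`. -/
noncomputable def pochR (x : ℝ) (k : ℕ) : ℝ := ∏ i ∈ Finset.range k, (x + i)

lemma pochR_zero (x : ℝ) : pochR x 0 = 1 := by
  simp [pochR]

lemma pochR_succ (x : ℝ) (k : ℕ) : pochR x (k + 1) = pochR x k * (x + k) :=
  Finset.prod_range_succ _ _

lemma pochR_succ' (x : ℝ) (k : ℕ) : pochR x (k + 1) = x * pochR (x + 1) k := by
  rw [pochR, Finset.prod_range_succ', pochR, mul_comm]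
  push_cast
  simp_rw [add_assoc, add_comm (1 : ℝ)]
  simp

lemma pochR_add (x : ℝ) (m k : ℕ) : pochR x (m + k) = pochR x m * pochR (x + m) k := by
  simp_rw [pochR, Finset.prod_range_add, Nat.cast_add, add_assoc]

lemma continuous_pochR (k : ℕ) : Continuous fun x => pochR x k :=
  continuous_finsetProd _ fun _ _ => by fun_prop

lemma pochR_one (k : ℕ) : pochR 1 k = k.factorial := by
  rw [pochR, ← Finset.prod_range_add_one_eq_factorial]
  push_cast
  simp_rw [add_comm (1 : ℝ)]

lemma pochR_neg_nat (m : ℕ) : pochR (-m) m = (-1) ^ m * m.factorial := by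
  induction m with
  | zero => simp [pochR_zero]
  | succ m ih =>
    rw [pochR_succ', show -((m + 1 : ℕ) : ℝ) + 1 = -m by push_cast; ring, ih,
      Nat.factorial_succ]
    push_cast
    ring

lemma pochR_sub_nat (x : ℝ) (m k : ℕ) :
    pochR (x - m) (m + (k + 1)) = x * (pochR (x - m) m * pochR (x + 1) k) := by
  rw [pochR_add, sub_add_cancel, pochR_succ']
  ring

lemma pochR_half (n : ℕ) :
    pochR (1 / 2) n = (2 * n).factorial / (4 ^ n * n.factorial) := by
  induction n with
  | zero => simp [pochR_zero]
  | succ n ih =>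
    rw [pochR_succ, ih, show 2 * (n + 1) = 2 * n + 1 + 1 by ring, Nat.factorial_succ,
      Nat.factorial_succ, Nat.factorial_succ]
    field_simp
    push_cast
    ring

lemma pochR_ratio_eq_of_ne_zero (n : ℕ) {ε : ℝ} (hε : ε ≠ 0) :
    pochR (ε - n) (2 * n + 1) / pochR (2 * ε - 2 * n) (2 * n + 1) =
      pochR (ε - n) n * pochR (ε + 1) n / (2 * pochR (2 * ε - 2 * n) (2 * n)) := by
  have hnum := pochR_sub_nat ε n n
  have hden := pochR_sub_nat (2 * ε) (2 * n) 0
  rw [show n + (n + 1) = 2 * n + 1 by ring] at hnum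
  rw [pochR_zero, mul_one] at hden
  push_cast at hden
  rw [hnum, hden, mul_assoc 2 ε, mul_left_comm 2 ε, mul_div_mul_left _ _ hε]

theorem stmt_18 (n : ℕ) :
    Tendsto (fun ε : ℝ => pochR (ε - n) (2 * n + 1) / pochR (2 * ε - 2 * n) (2 * n + 1))
      (𝓝[≠] 0)
      (𝓝 ((-1) ^ n * (Nat.factorial n : ℝ) ^ 2 / (2 * (Nat.factorial (2 * n) : ℝ)))) ∧
    (-1) ^ n * (Nat.factorial n : ℝ) ^ 2 / (2 * (Nat.factorial (2 * n) : ℝ)) =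
      (-1) ^ n * (Nat.factorial n : ℝ) / (2 ^ (2 * n + 1) * pochR (1 / 2) n) := by
  set g : ℝ → ℝ := fun ε =>
    pochR (ε - n) n * pochR (ε + 1) n / (2 * pochR (2 * ε - 2 * n) (2 * n))
  have hden0 : pochR (2 * 0 - 2 * n) (2 * n) = (2 * n).factorial := by
    simpa [pow_mul] using pochR_neg_nat (2 * n)
  have hg0 : g 0 = (-1) ^ n * (n.factorial : ℝ) ^ 2 / (2 * ((2 * n).factorial : ℝ)) := by
    simp only [g, hden0, zero_sub, zero_add, pochR_neg_nat, pochR_one]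
    ring
  have hg : ContinuousAt g 0 := by
    refine ((continuous_pochR n).comp (by fun_prop) |>.mul
      ((continuous_pochR n).comp (by fun_prop))).continuousAt.div
      (continuous_const.mul ((continuous_pochR _).comp (by fun_prop))).continuousAt ?_
    simp only [hden0]
    positivity
  refine ⟨hg0 ▸ (hg.tendsto.mono_left nhdsWithin_le_nhds).congr' ?_, ?_⟩
  · filter_upwards [self_mem_nhdsWithin] with ε hε using (pochR_ratio_eq_of_ne_zero n hε).symm
  · rw [pochR_half, pow_succ (2 : ℝ), pow_mul]
    field_simp
    norm_num
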